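/- Let μ be an atomless Borel probability measure on ℝ and μ^6 the product measure on (Fin 6 → ℝ). Then the probability of the event that positions 1 and 4 are local maxima and position 2 and position 3 are not local maxima equals 1/9; i.e. ⟨UDUUD⟩ + ⟨UDDUD⟩ = 1/9. -/

import Mathlib

/-!
Ties among i.i.d. samples of an atomless law have probability zero, and permuting the
coordinates preserves `μ^n`, so almost surely the sample lies in exactly one of the `n!` cells
`x (σ 0) < ⋯ < x (σ (n-1))`, each of probability `1/n!`. An event that only depends on the
relative order of the coordinates therefore has probability `#{admissible σ} / n!`; for the
pattern at hand `80` of the `720` orders of six points are admissible.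
-/

open MeasureTheory ProbabilityTheory Function
open scoped ENNReal Nat

section Ties

variable {α ι : Type*} [MeasurableSpace α] [MeasurableEq α]

theorem measure_prod_diagonal_eq_zero (μ ν : Measure α) [SFinite ν] [NullSingletonClass ν] :
    (μ.prod ν) (Set.diagonal α) = 0 := by
  rw [Measure.prod_apply measurableSet_diagonal]
  simp [Set.preimage, Set.diagonal]

variable [Fintype ι] (μ : Measure α) [IsProbabilityMeasure μ] [NullSingletonClass μ]

theorem ae_pi_apply_ne {i j : ι} (hij : i ≠ j) :
    ∀ᵐ x ∂Measure.pi (fun _ : ι => μ), x i ≠ x j := by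
  have hmap : (Measure.pi fun _ : ι => μ).map (fun x => (x i, x j)) = μ.prod μ := by
    have hindep : IndepFun (fun x : ι → α => x i) (fun x => x j) (Measure.pi fun _ => μ) :=
      (iIndepFun_pi (X := fun _ : ι => id) fun _ => aemeasurable_id).indepFun hij
    rw [hindep.map_prod_eq_prod_map_map
      (measurable_pi_apply i).aemeasurable (measurable_pi_apply j).aemeasurable,
      (measurePreserving_eval _ i).map_eq, (measurePreserving_eval _ j).map_eq]
  have hnull : (Measure.pi fun _ : ι => μ) ((fun x => (x i, x j)) ⁻¹' Set.diagonal α) = 0 := by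
    rw [← Measure.map_apply (by fun_prop) measurableSet_diagonal, hmap,
      measure_prod_diagonal_eq_zero]
  exact measure_eq_zero_iff_ae_notMem.1 hnull

theorem ae_injective_pi : ∀ᵐ x ∂Measure.pi (fun _ : ι => μ), Injective x := by
  have hne : ∀ᵐ x ∂Measure.pi (fun _ : ι => μ), ∀ i j, i ≠ j → x i ≠ x j :=
    ae_all_iff.2 fun i => ae_all_iff.2 fun j => by
      by_cases hij : i = j
      · simp [hij]
      · filter_upwards [ae_pi_apply_ne μ hij] with x hx using fun _ => hx
  filter_upwards [hne] with x hx i j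
  exact not_imp_not.1 (hx i j)

end Ties

section OrderCells

variable {n : ℕ}

/-- For `x ∈ orderCell σ`, `σ.symm k` is the rank of `x k` among the coordinates of `x`. -/
def orderCell (σ : Equiv.Perm (Fin n)) : Set (Fin n → ℝ) := {x | StrictMono (x ∘ σ)}

theorem measurableSet_orderCell (σ : Equiv.Perm (Fin n)) : MeasurableSet (orderCell σ) := by
  have : orderCell σ = ⋂ (a : Fin n) (b : Fin n) (_ : a < b), {x | x (σ a) < x (σ b)} := by
    ext x
    simp [orderCell, StrictMono]
  rw [this]
  exact .iInter fun a => .iInter fun b => .iInter fun _ =>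
    measurableSet_lt (measurable_pi_apply _) (measurable_pi_apply _)

theorem lt_iff_of_mem_orderCell {σ : Equiv.Perm (Fin n)} {x : Fin n → ℝ} (hx : x ∈ orderCell σ)
    (k l : Fin n) : x k < x l ↔ σ.symm k < σ.symm l := by
  simpa using hx.lt_iff_lt (a := σ.symm k) (b := σ.symm l)

theorem pairwise_disjoint_orderCell : Pairwise (Disjoint on @orderCell n) := by
  intro σ τ hστ
  refine Set.disjoint_left.2 fun x hσ hτ => hστ ?_
  have hinj : Injective x := hσ.injective.of_comp_right σ.surjective
  have hrange : Set.range (x ∘ σ) = Set.range (x ∘ τ) := by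
    rw [Set.range_comp, Set.range_comp, σ.surjective.range_eq, τ.surjective.range_eq]
  have hcomp : x ∘ σ = x ∘ τ := (StrictMono.range_inj hσ hτ).1 hrange
  exact Equiv.ext fun k => hinj (congrFun hcomp k)

theorem exists_mem_orderCell {x : Fin n → ℝ} (hx : Injective x) : ∃ σ, x ∈ orderCell σ :=
  ⟨Tuple.sort x, (Tuple.monotone_sort x).strictMono_of_injective (hx.comp (Tuple.sort x).injective)⟩

theorem measure_orderCell_eq_measure_orderCell_one (μ : Measure ℝ) [SigmaFinite μ]
    (σ : Equiv.Perm (Fin n)) :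
    Measure.pi (fun _ => μ) (orderCell σ) =
      Measure.pi (fun _ => μ) (orderCell (1 : Equiv.Perm (Fin n))) := by
  have h := measurePreserving_arrowCongr' (fun _ => μ) (fun _ => μ) σ.symm (.refl ℝ)
    fun _ => .id μ
  rw [← h.measure_preimage (measurableSet_orderCell 1).nullMeasurableSet]
  rfl

theorem measure_orderCell (μ : Measure ℝ) [IsProbabilityMeasure μ] [NullSingletonClass μ]
    (σ : Equiv.Perm (Fin n)) :
    Measure.pi (fun _ => μ) (orderCell σ) = (n ! : ℝ≥0∞)⁻¹ := by
  set ν := Measure.pi fun _ : Fin n => μ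
  have hcover : ∀ᵐ x ∂ν, x ∈ ⋃ τ, orderCell τ :=
    (ae_injective_pi μ).mono fun x hx => Set.mem_iUnion.2 (exists_mem_orderCell hx)
  have hsum : ∑ τ, ν (orderCell τ) = 1 := by
    calc ∑ τ, ν (orderCell τ) = ν (⋃ τ, orderCell τ) := by
          rw [measure_iUnion pairwise_disjoint_orderCell measurableSet_orderCell, tsum_fintype]
      _ = ν Set.univ := measure_congr (ae_eq_univ.2 (ae_iff.1 hcover))
      _ = 1 := measure_univ
  rw [Finset.sum_congr rfl fun τ _ => measure_orderCell_eq_measure_orderCell_one μ τ] at hsum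
  simp only [Finset.sum_const, Finset.card_univ, Fintype.card_perm, Fintype.card_fin,
    nsmul_eq_mul] at hsum
  rw [measure_orderCell_eq_measure_orderCell_one μ]
  exact ENNReal.eq_inv_of_mul_eq_one_left (by rwa [mul_comm])

theorem measure_setOf_orderPattern (μ : Measure ℝ) [IsProbabilityMeasure μ]
    [NullSingletonClass μ]
    (Q : (Fin n → Fin n → Prop) → Prop)
    [DecidablePred fun σ : Equiv.Perm (Fin n) => Q fun k l => σ.symm k < σ.symm l] :
    Measure.pi (fun _ => μ) {x | Q fun k l => x k < x l} =
      (Finset.univ.filter fun σ : Equiv.Perm (Fin n) => Q fun k l => σ.symm k < σ.symm l).card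
        / (n ! : ℝ≥0∞) := by
  set S := Finset.univ.filter fun σ : Equiv.Perm (Fin n) => Q fun k l => σ.symm k < σ.symm l
  have hae : {x : Fin n → ℝ | Q fun k l => x k < x l} =ᵐ[Measure.pi fun _ => μ]
      ⋃ σ ∈ S, orderCell σ := by
    refine Filter.eventuallyEq_set.2 ((ae_injective_pi μ).mono fun x hx => ?_)
    obtain ⟨σ, hσ⟩ := exists_mem_orderCell hx
    have hpattern : (fun k l => x k < x l) = fun k l => σ.symm k < σ.symm l := by
      ext k l
      exact lt_iff_of_mem_orderCell hσ k l
    have hcell : ∀ τ, x ∈ orderCell τ ↔ τ = σ := fun τ =>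
      ⟨fun hτ => by_contra fun hne => Set.disjoint_left.1 (pairwise_disjoint_orderCell hne) hτ hσ,
        fun h => h ▸ hσ⟩
    simp [S, hpattern, hcell]
  rw [measure_congr hae, measure_biUnion_finset (fun σ _ τ _ h => pairwise_disjoint_orderCell h)
    fun σ _ => measurableSet_orderCell σ]
  simp [measure_orderCell μ, div_eq_mul_inv]

end OrderCells

theorem uduud_plus_uddud_prob
    (μ : Measure ℝ) [IsProbabilityMeasure μ] [NullSingletonClass μ] :
    (Measure.pi fun _ : Fin 6 => μ)
      {x | x 0 < x 1 ∧ x 2 < x 1 ∧ x 3 < x 4 ∧ x 5 < x 4 ∧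
           ¬(x 1 < x 2 ∧ x 3 < x 2) ∧ ¬(x 2 < x 3 ∧ x 4 < x 3)} = 1 / 9 := by
  rw [measure_setOf_orderPattern μ
    fun r => r 0 1 ∧ r 2 1 ∧ r 3 4 ∧ r 5 4 ∧ ¬(r 1 2 ∧ r 3 2) ∧ ¬(r 2 3 ∧ r 4 3)]
  have hcount : (Finset.univ.filter fun σ : Equiv.Perm (Fin 6) =>
      σ.symm 0 < σ.symm 1 ∧ σ.symm 2 < σ.symm 1 ∧ σ.symm 3 < σ.symm 4 ∧ σ.symm 5 < σ.symm 4 ∧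
      ¬(σ.symm 1 < σ.symm 2 ∧ σ.symm 3 < σ.symm 2) ∧
      ¬(σ.symm 2 < σ.symm 3 ∧ σ.symm 4 < σ.symm 3)).card = 80 := by
    set_option maxRecDepth 100000 in decide
  rw [hcount, ENNReal.div_eq_div_iff] <;> norm_num [Nat.factorial]
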